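/- arXiv:1811.09939 — 4 statements merged into one kernel-verified Lean document; each statement's English description precedes it below -/
import Mathlib

section
/- Let V be a real vector space, let θ = ι(x) and σ = ι(y) in the exterior algebra Λ = ⋀(V), let χ > 0 be real, and set μ = (1/√(1+χ))·(θ + √χ·σ), ν = (1/√(1+χ))·(σ − √χ·θ). Apply the same transformation again with inverse cross-ratio χ' = 1/χ to the pair (μ, ν): μ' = (1/√(1+χ'))·(μ + √χ'·ν), ν' = (1/√(1+χ'))·(ν − √χ'·μ). Then μ' = σ and ν' = −θ. (Performing the flip twice returns the original odd invariants up to the single sign change prescribed by the spin-graph evolution of Figure 1.) -/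
/-!
With `c = 1/√(1+χ)` and `s = √χ/√(1+χ)` the flip is the rotation
`(θ, σ) ↦ (c θ + s σ, c σ - s θ)`, and `c² + s² = 1`. Inverting the cross-ratio swaps `c`
and `s`, so the second flip is the rotation by the complementary angle and the composite is
the rotation by a right angle, `(θ, σ) ↦ (σ, -θ)`.
-/

section Rotation

variable {R M : Type*} [CommRing R] [AddCommGroup M] [Module R M]

theorem rotation_then_complementary_rotation {c s : R} (h : c ^ 2 + s ^ 2 = 1) (θ σ : M) :
    s • (c • θ + s • σ) + c • (c • σ - s • θ) = σ ∧
      s • (c • σ - s • θ) - c • (c • θ + s • σ) = -θ := by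
  constructor
  · linear_combination (norm := module) h • σ
  · linear_combination (norm := module) -(h • θ)

end Rotation

namespace SuperPtolemy

open Real

noncomputable def flipCos (χ : ℝ) : ℝ := (√(1 + χ))⁻¹

noncomputable def flipSin (χ : ℝ) : ℝ := √χ / √(1 + χ)

theorem flipCos_sq_add_flipSin_sq {χ : ℝ} (hχ : 0 ≤ χ) : flipCos χ ^ 2 + flipSin χ ^ 2 = 1 := by
  have h1χ : 0 < 1 + χ := by linarith
  rw [flipCos, flipSin, inv_pow, div_pow, sq_sqrt hχ, sq_sqrt h1χ.le]
  field_simp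

theorem sqrt_one_add_inv {χ : ℝ} (hχ : 0 < χ) : √(1 + χ⁻¹) = √(1 + χ) / √χ := by
  rw [← sqrt_div (by linarith), add_div, div_self hχ.ne', one_div]
  ring_nf

theorem flipCos_inv {χ : ℝ} (hχ : 0 < χ) : flipCos χ⁻¹ = flipSin χ := by
  rw [flipCos, flipSin, sqrt_one_add_inv hχ, inv_div]

theorem flipSin_inv {χ : ℝ} (hχ : 0 < χ) : flipSin χ⁻¹ = flipCos χ := by
  have hsχ : √χ ≠ 0 := (sqrt_pos.mpr hχ).ne'
  rw [flipCos, flipSin, sqrt_one_add_inv hχ, sqrt_inv]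
  field_simp

variable {M : Type*} [AddCommGroup M] [Module ℝ M]

noncomputable def flip (χ : ℝ) (θ σ : M) : M × M :=
  ((√(1 + χ))⁻¹ • (θ + √χ • σ), (√(1 + χ))⁻¹ • (σ - √χ • θ))

theorem flip_eq_rotation (χ : ℝ) (θ σ : M) :
    flip χ θ σ = (flipCos χ • θ + flipSin χ • σ, flipCos χ • σ - flipSin χ • θ) := by
  rw [flip, flipCos, flipSin, div_eq_inv_mul]
  congr 1 <;> module

theorem flip_inv_flip {χ : ℝ} (hχ : 0 < χ) (θ σ : M) :
    flip χ⁻¹ (flip χ θ σ).1 (flip χ θ σ).2 = (σ, -θ) := by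
  rw [flip_eq_rotation χ⁻¹, flipCos_inv hχ, flipSin_inv hχ, flip_eq_rotation]
  obtain ⟨hfst, hsnd⟩ := rotation_then_complementary_rotation
    (flipCos_sq_add_flipSin_sq hχ.le) θ σ
  exact Prod.ext hfst hsnd

end SuperPtolemy

open ExteriorAlgebra

theorem superPtolemy_flip_twice_general
    {V : Type*} [AddCommGroup V] [Module ℝ V] (χ χ' : ℝ) (hχ : 0 < χ)
    (hχ' : χ' = 1 / χ)
    (θ σ μ ν μ' ν' : ExteriorAlgebra ℝ V)
    (hμ : μ = (Real.sqrt (1 + χ))⁻¹ • (θ + Real.sqrt χ • σ))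
    (hν : ν = (Real.sqrt (1 + χ))⁻¹ • (σ - Real.sqrt χ • θ))
    (hμ' : μ' = (Real.sqrt (1 + χ'))⁻¹ • (μ + Real.sqrt χ' • ν))
    (hν' : ν' = (Real.sqrt (1 + χ'))⁻¹ • (ν - Real.sqrt χ' • μ)) :
    μ' = σ ∧ ν' = -θ := by
  rw [one_div] at hχ'
  subst hμ' hν' hμ hν hχ'
  exact Prod.ext_iff.mp (SuperPtolemy.flip_inv_flip hχ θ σ)

/-- Performing the super Ptolemy flip twice (the second time with the inverse
cross-ratio `χ' = 1/χ`) returns the original odd invariants up to the single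
sign change prescribed by the spin-graph evolution: `μ' = σ` and `ν' = -θ`. -/
theorem superPtolemy_flip_twice
    {V : Type*} [AddCommGroup V] [Module ℝ V] (x y : V) (χ χ' : ℝ) (hχ : 0 < χ)
    (hχ' : χ' = 1 / χ)
    (θ σ μ ν μ' ν' : ExteriorAlgebra ℝ V)
    (hθ : θ = ι ℝ x) (hσ : σ = ι ℝ y)
    (hμ : μ = (Real.sqrt (1 + χ))⁻¹ • (θ + Real.sqrt χ • σ))
    (hν : ν = (Real.sqrt (1 + χ))⁻¹ • (σ - Real.sqrt χ • θ))
    (hμ' : μ' = (Real.sqrt (1 + χ'))⁻¹ • (μ + Real.sqrt χ' • ν))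
    (hν' : ν' = (Real.sqrt (1 + χ'))⁻¹ • (ν - Real.sqrt χ' • μ)) :
    μ' = σ ∧ ν' = -θ :=
  superPtolemy_flip_twice_general χ χ' hχ hχ' θ σ μ ν μ' ν' hμ hν hμ' hν'
end

section
/- Let V be a real vector space, let θ = ι(x) and σ = ι(y) in the exterior algebra Λ = ⋀(V), let a, b, c, d > 0 be real, χ = ac/(bd), and set μ = (1/√(1+χ))·(θ + √χ·σ), ν = (1/√(1+χ))·(σ − √χ·θ), and χ' = 1/χ. Then (ac + bd)·(1 + ν·μ·√χ'/(1+χ')) = (ac + bd)·(1 + σ·θ·√χ/(1+χ)) in Λ. Consequently, if e > 0 and f ∈ Λ satisfy the super Ptolemy relation e·f = (ac+bd)(1 + σθ√χ/(1+χ)), then the reverse flip relation f·e'' = (ac+bd)(1 + νμ√χ'/(1+χ')) is solved by the multiple e'' of 1 with e'' = e·1, i.e. the inverse flip recovers the original even λ-length e. -/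
open ExteriorAlgebra

/-- The even part of the super Ptolemy relation is invariant under the reverse
flip: `(ac+bd)(1 + νμ√χ'/(1+χ')) = (ac+bd)(1 + σθ√χ/(1+χ))` with `χ' = 1/χ`.
Consequently, if `e·f = (ac+bd)(1 + σθ√χ/(1+χ))` then the reverse flip relation
`f·e'' = (ac+bd)(1 + νμ√χ'/(1+χ'))` is solved by `e'' = e·1`, i.e. the inverse
flip recovers the original even λ-length `e`. -/
theorem superPtolemy_inverse_flip_recovers_lambda_length
    {V : Type*} [AddCommGroup V] [Module ℝ V] (x y : V)
    (a b c d : ℝ) (ha : 0 < a) (hb : 0 < b) (hc : 0 < c) (hd : 0 < d)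
    (χ χ' : ℝ) (hχ : χ = a * c / (b * d)) (hχ' : χ' = 1 / χ)
    (θ σ μ ν : ExteriorAlgebra ℝ V)
    (hθ : θ = ι ℝ x) (hσ : σ = ι ℝ y)
    (hμ : μ = (Real.sqrt (1 + χ))⁻¹ • (θ + Real.sqrt χ • σ))
    (hν : ν = (Real.sqrt (1 + χ))⁻¹ • (σ - Real.sqrt χ • θ)) :
    (a * c + b * d) • ((1 : ExteriorAlgebra ℝ V) +
        (Real.sqrt χ' / (1 + χ')) • (ν * μ)) =
      (a * c + b * d) • ((1 : ExteriorAlgebra ℝ V) +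
        (Real.sqrt χ / (1 + χ)) • (σ * θ)) ∧
    ∀ e : ℝ, 0 < e → ∀ f : ExteriorAlgebra ℝ V,
      e • f = (a * c + b * d) • ((1 : ExteriorAlgebra ℝ V) +
          (Real.sqrt χ / (1 + χ)) • (σ * θ)) →
      f * (e • (1 : ExteriorAlgebra ℝ V)) =
        (a * c + b * d) • ((1 : ExteriorAlgebra ℝ V) +
          (Real.sqrt χ' / (1 + χ')) • (ν * μ)) := by
  have hχpos : 0 < χ := by
    rw [hχ]; positivity
  have h1χ : (0:ℝ) < 1 + χ := by linarith
  have hsχ : Real.sqrt χ * Real.sqrt χ = χ := Real.mul_self_sqrt hχpos.le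
  have hsχne : Real.sqrt χ ≠ 0 := by positivity
  -- scalar coefficient equality
  have hcoef : Real.sqrt χ' / (1 + χ') = Real.sqrt χ / (1 + χ) := by
    rw [hχ', one_div, Real.sqrt_inv]
    rw [div_eq_div_iff (by positivity) (by positivity)]
    field_simp
    nlinarith [hsχ]
  -- algebraic relations among odd elements
  have hθθ : θ * θ = 0 := by rw [hθ]; exact ι_sq_zero x
  have hσσ : σ * σ = 0 := by rw [hσ]; exact ι_sq_zero y
  have hswap : θ * σ = -(σ * θ) := by
    rw [hθ, hσ, eq_neg_iff_add_eq_zero]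
    exact ι_add_mul_swap (R := ℝ) x y
  -- ν * μ = σ * θ
  have hνμ : ν * μ = σ * θ := by
    have hts : (Real.sqrt (1 + χ))⁻¹ * (Real.sqrt (1 + χ))⁻¹ = (1 + χ)⁻¹ := by
      rw [← mul_inv, Real.mul_self_sqrt h1χ.le]
    rw [hμ, hν, smul_mul_smul_comm, hts, sub_mul, mul_add, mul_add,
      smul_mul_assoc, smul_mul_assoc, mul_smul_comm, mul_smul_comm,
      hσσ, hθθ, hswap]
    simp only [add_zero, zero_add, smul_zero, smul_neg, smul_smul, hsχ,
      sub_neg_eq_add]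
    have h2 : σ * θ + χ • (σ * θ) = (1 + χ) • (σ * θ) := by
      rw [add_smul, one_smul]
    rw [h2, smul_smul, inv_mul_cancel₀ h1χ.ne', one_smul]
  have key : (a * c + b * d) • ((1 : ExteriorAlgebra ℝ V) +
        (Real.sqrt χ' / (1 + χ')) • (ν * μ)) =
      (a * c + b * d) • ((1 : ExteriorAlgebra ℝ V) +
        (Real.sqrt χ / (1 + χ)) • (σ * θ)) := by
    rw [hcoef, hνμ]
  refine ⟨key, fun e he f hf => ?_⟩
  have : f * (e • (1 : ExteriorAlgebra ℝ V)) = e • f := by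
    rw [mul_smul_comm, mul_one]
  rw [this, hf, key]
end

section
/- Let G be a finite simple graph, let ω be an orientation of G (a choice, for each edge, of one of its two directions), let w be a closed walk in G, and let v be a vertex of G. Let ω' be the orientation obtained from ω by reversing the direction of every edge incident to v (the fatgraph reflection at v). Then the number of steps of w that are traversed against the orientation has the same parity with respect to ω as with respect to ω'. (Hence the parity of the number k of disagreeing edges along a boundary cycle of a fatgraph is invariant under fatgraph reflections, so the classification of punctures as Ramond (k even) or Neveu–Schwarz (k odd) depends only on the equivalence class of the orientation, i.e. on the spin structure.) -/
private lemma countP_cast_eq_sum {α : Type*} (f : α → ZMod 2) [DecidablePred fun a => f a = 1]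
    (l : List α) :
    ((l.countP fun a => f a = 1 : ℕ) : ZMod 2) = (l.map f).sum := by
  induction l with
  | nil => simp
  | cons a l ih =>
    rw [List.countP_cons, List.map_cons, List.sum_cons, Nat.cast_add, ih]
    have hb : f a = 0 ∨ f a = 1 := by generalize f a = b; revert b; decide
    rcases hb with h | h <;> simp [h, add_comm]

private lemma indicator_sum_eq_count {α : Type*} [DecidableEq α] (v : α) (l : List α) :
    (l.map fun a => if a = v then (1 : ZMod 2) else 0).sum = (l.count v : ZMod 2) := by
  induction l with
  | nil => simp
  | cons a l ih =>
    by_cases h : a = v <;> simp [List.count_cons, h, ih, add_comm]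

/-- The parity of the number of steps of a closed walk traversed against an
orientation is invariant under the fatgraph reflection at a vertex `v` (which
reverses the direction of every edge incident to `v`).  An orientation is
encoded as `ω : V → V → ℤ/2` with `ω u u' + ω u' u = 1` on adjacent pairs, a
step `(u, u')` being traversed against the orientation when `ω u u' = 1`; the
reflected orientation is `ω' u u' = ω u u' + [u = v] + [u' = v]`.  Hence the
Ramond/Neveu–Schwarz classification of punctures depends only on the
equivalence class of the orientation, i.e. on the spin structure. -/
theorem parity_of_disagreeing_steps_invariant_under_reflection
    {V : Type*} [DecidableEq V] (G : SimpleGraph V)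
    (ω : V → V → ZMod 2)
    (hω : ∀ u u' : V, G.Adj u u' → ω u u' + ω u' u = 1)
    (v : V) (x : V) (w : G.Walk x x)
    (ω' : V → V → ZMod 2)
    (hω' : ω' = fun a b =>
      ω a b + (if a = v then 1 else 0) + (if b = v then 1 else 0)) :
    (w.darts.countP fun d => ω d.fst d.snd = 1) % 2 =
      (w.darts.countP fun d => ω' d.fst d.snd = 1) % 2 := by
  rw [← Nat.ModEq]
  rw [← ZMod.natCast_eq_natCast_iff]
  rw [countP_cast_eq_sum (fun d : G.Dart => ω d.fst d.snd),
    countP_cast_eq_sum (fun d : G.Dart => ω' d.fst d.snd)]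
  subst hω'
  have hsplit : (w.darts.map fun d : G.Dart =>
      ω d.fst d.snd + (if d.fst = v then (1 : ZMod 2) else 0)
        + (if d.snd = v then 1 else 0)).sum
      = (w.darts.map fun d : G.Dart => ω d.fst d.snd).sum
        + (w.darts.map fun d : G.Dart => if d.fst = v then (1 : ZMod 2) else 0).sum
        + (w.darts.map fun d : G.Dart => if d.snd = v then (1 : ZMod 2) else 0).sum := by
    induction w.darts with
    | nil => simp
    | cons d l ih => simp [ih]; ring
  rw [hsplit]
  have hfst : (w.darts.map fun d : G.Dart => if d.fst = v then (1 : ZMod 2) else 0).sum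
      = ((w.darts.map fun d : G.Dart => d.fst).count v : ZMod 2) := by
    rw [← indicator_sum_eq_count v (w.darts.map fun d : G.Dart => d.fst), List.map_map]
    rfl
  have hsnd : (w.darts.map fun d : G.Dart => if d.snd = v then (1 : ZMod 2) else 0).sum
      = ((w.darts.map fun d : G.Dart => d.snd).count v : ZMod 2) := by
    rw [← indicator_sum_eq_count v (w.darts.map fun d : G.Dart => d.snd), List.map_map]
    rfl
  have hcount : (w.darts.map fun d : G.Dart => d.fst).count v
      = (w.darts.map fun d : G.Dart => d.snd).count v := by
    have h1 := congr_arg (List.count v) (SimpleGraph.Walk.map_fst_darts_append w)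
    have h2 := congr_arg (List.count v) (SimpleGraph.Walk.cons_map_snd_darts w)
    simp [List.count_append, List.count_cons] at h1 h2
    omega
  rw [hfst, hsnd, hcount]
  have : ∀ a b : ZMod 2, a + b + b = a := by decide
  rw [this]
end

section
/- Let G be a finite connected simple graph in which every vertex has degree 3, with n vertices, m edges, and n − m = 2 − 2g − s for integers g ≥ 0, s ≥ 0 with 2g − 2 + s > 0. Then the number of equivalence classes of orientations of G under fatgraph reflections equals 2^{2g+s−1}. (Hence the decorated super-Teichmüller space of a genus-g surface with s punctures has 2^{2g+s−1} connected components, one for each reflection-class of orientations, i.e. for each spin structure.) -/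
section Aux
variable {V : Type*} [Fintype V] [DecidableEq V] (G : SimpleGraph V) [DecidableRel G.Adj]

/-- The "coboundary" linear map sending vertex subsets (reflection data) to edge flips. -/
noncomputable def fatD : (V → ZMod 2) →ₗ[ZMod 2] (G.edgeSet → ZMod 2) where
  toFun s' := fun e =>
    Sym2.lift ⟨fun u v => s' u + s' v, fun u v => by ring⟩ (e : Sym2 V)
  map_add' a b := by
    funext e
    obtain ⟨e, he⟩ := e
    induction e using Sym2.ind with
    | _ u v => simp [Sym2.lift_mk]; ring
  map_smul' c a := by
    funext e
    obtain ⟨e, he⟩ := e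
    induction e using Sym2.ind with
    | _ u v => simp [Sym2.lift_mk, smul_eq_mul]; ring

lemma fatD_ker_const (hconn : G.Connected) {x : V → ZMod 2}
    (hx : x ∈ LinearMap.ker (fatD G)) (u w : V) : x u = x w := by
  have hx' : fatD G x = 0 := hx
  obtain ⟨p⟩ := hconn u w
  induction p with
  | nil => rfl
  | cons h q ih =>
    rename_i a b c
    have h0 : x a + x b = 0 := by
      have := congrFun hx' ⟨s(a, b), G.mem_edgeSet.mpr h⟩
      simpa [fatD, Sym2.lift_mk] using this
    have hab : x a = x b := by
      revert h0; generalize x a = p; generalize x b = q; revert p q; decide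
    rw [hab]; exact ih
end Aux

/-- For a finite connected trivalent simple graph with `n` vertices, `m` edges
and Euler characteristic `n − m = 2 − 2g − s`, where `2g − 2 + s > 0`, the
number of equivalence classes of orientations under fatgraph reflections
(orientations being encoded as functions `E → ℤ/2` relative to a reference
orientation, related when they differ by the reflections at the vertices of
some subset, encoded as `s' : V → ℤ/2`) equals `2^(2g+s−1)`.  Hence the
decorated super-Teichmüller space of a genus-`g` surface with `s` punctures has
`2^(2g+s−1)` connected components, one for each spin structure. -/
theorem card_orientation_classes_of_trivalent_spine
    {V : Type*} [Fintype V] [DecidableEq V] (G : SimpleGraph V)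
    [DecidableRel G.Adj] (hconn : G.Connected)
    (h3 : ∀ v : V, G.degree v = 3)
    (n m : ℕ) (hn : n = Fintype.card V) (hm : m = G.edgeFinset.card)
    (g s : ℤ) (hg : 0 ≤ g) (hs : 0 ≤ s) (hgs : 0 < 2 * g - 2 + s)
    (heuler : (n : ℤ) - (m : ℤ) = 2 - 2 * g - s)
    (r : (G.edgeSet → ZMod 2) → (G.edgeSet → ZMod 2) → Prop)
    (hr : ∀ ω₁ ω₂, r ω₁ ω₂ ↔ ∃ s' : V → ZMod 2, ∀ e : G.edgeSet,
        ω₂ e = ω₁ e +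
          Sym2.lift ⟨fun u v => s' u + s' v, fun u v => by ring⟩ (e : Sym2 V)) :
    (Nat.card (Quot r) : ℤ) = 2 ^ (2 * g + s - 1).toNat := by
  classical
  haveI : Nonempty V := hconn.nonempty
  set d := fatD G with hd
  set W := LinearMap.range d with hW
  -- the relation `r` is exactly the quotient relation of `W`
  have key : ∀ a b, r a b ↔
      (Submodule.Quotient.mk (p := W) a = Submodule.Quotient.mk b) := by
    intro a b
    rw [hr, Submodule.Quotient.eq]
    constructor
    · rintro ⟨s', hs'⟩
      have hb : b = a + d s' := funext fun e => hs' e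
      have : a - b = -(d s') := by rw [hb]; abel
      rw [this]
      exact W.neg_mem ⟨s', rfl⟩
    · rintro ⟨s', hs'⟩
      refine ⟨s', fun e => ?_⟩
      have h1 : a e - b e = Sym2.lift
          ⟨fun u v => s' u + s' v, fun u v => by ring⟩ (e : Sym2 V) := by
        have := congrFun hs' e
        simpa [hd, fatD] using this.symm
      rw [← h1]
      revert h1
      generalize a e = p; generalize b e = q
      generalize (Sym2.lift ⟨fun u v => s' u + s' v, fun u v => by ring⟩
        (e : Sym2 V)) = t
      revert p q t; decide
  -- `Quot r` is the module quotient by `W`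
  have equiv1 : Quot r ≃ ((G.edgeSet → ZMod 2) ⧸ W) :=
    { toFun := Quot.lift (fun a => Submodule.Quotient.mk a)
        (fun a b hab => (key a b).mp hab)
      invFun := Quotient.lift (Quot.mk r)
        (fun a b hab => Quot.sound ((key a b).mpr (Quotient.sound hab)))
      left_inv := fun q => by induction q using Quot.ind with | _ a => rfl
      right_inv := fun q => by induction q using Quotient.ind with | _ a => rfl }
  -- the kernel of `d` consists of the constants, hence has 2 elements
  have hkercard : Nat.card (LinearMap.ker d) = 2 := by
    have e2 : ZMod 2 ≃ LinearMap.ker d :=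
      { toFun := fun c => ⟨fun _ => c, by
          have hc : c + c = 0 := by revert c; decide
          refine LinearMap.mem_ker.mpr ?_
          funext e
          obtain ⟨e, he⟩ := e
          induction e using Sym2.ind with
          | _ u v => simpa [hd, fatD, Sym2.lift_mk] using hc⟩
        invFun := fun x => x.1 (Classical.arbitrary V)
        left_inv := fun c => rfl
        right_inv := fun x => by
          ext u
          exact (fatD_ker_const G hconn x.2 u (Classical.arbitrary V)).symm }
    rw [← Nat.card_congr e2, Nat.card_zmod]
  -- cardinalities
  have cV : Nat.card (V → ZMod 2) = 2 ^ n := by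
    simp [Nat.card_eq_fintype_card, Fintype.card_fun, hn]
  have cE : Nat.card (G.edgeSet → ZMod 2) = 2 ^ m := by
    simp [Nat.card_eq_fintype_card, Fintype.card_fun, hm,
      Set.toFinset_card, SimpleGraph.edgeFinset]
  have hn1 : 1 ≤ n := by rw [hn]; exact Fintype.card_pos
  -- rank-nullity counting: card W = 2 ^ (n - 1)
  have hq : Nat.card ((V → ZMod 2) ⧸ LinearMap.ker d) = Nat.card W :=
    Nat.card_congr (LinearMap.quotKerEquivRange d).toEquiv
  have h1 : 2 ^ n = 2 * Nat.card W := by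
    rw [← cV, Submodule.card_eq_card_quotient_mul_card (LinearMap.ker d),
      hkercard, hq]
  have hWcard : Nat.card W = 2 ^ (n - 1) := by
    have hpow : 2 ^ n = 2 * 2 ^ (n - 1) := by
      rw [← pow_succ']
      congr 1
      omega
    rw [hpow] at h1
    exact (Nat.eq_of_mul_eq_mul_left (by norm_num) h1).symm
  -- counting the quotient itself
  have h2 : 2 ^ m = 2 ^ (n - 1) * Nat.card (Quot r) := by
    rw [← cE, Submodule.card_eq_card_quotient_mul_card W, hWcard,
      Nat.card_congr equiv1]
  set k := (2 * g + s - 1).toNat with hk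
  have hk' : (k : ℤ) = 2 * g + s - 1 := Int.toNat_of_nonneg (by omega)
  have hm' : m = (n - 1) + k := by omega
  have : Nat.card (Quot r) = 2 ^ k := by
    rw [hm', pow_add] at h2
    exact (Nat.eq_of_mul_eq_mul_left (by positivity) h2).symm
  rw [this]
  push_cast
  ring
end
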